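/- The double integral ∫₀^π ∫₀^π (cos 2α − 1)/(2 − cos α − cos β) dα dβ equals 2π² (2/π − 1) = 4π − 2π². Equivalently, the value g_{(2,0)} = (1/(2π²))∫₀^π∫₀^π (cos 2α − 1)/(2 − cos α − cos β) dα dβ equals 2/π − 1. -/

import Mathlib

open Real intervalIntegral

lemma innerInt (c : ℝ) (hc : 1 < c) :
    (∫ b in (0:ℝ)..π, (c - Real.cos b)⁻¹) = π / Real.sqrt (c^2 - 1) := by
  have hc1 : (0:ℝ) < c^2 - 1 := by nlinarith
  set s := Real.sqrt (c^2 - 1) with hs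
  have hs2 : s^2 = c^2 - 1 := Real.sq_sqrt hc1.le
  have hs0 : 0 < s := Real.sqrt_pos.mpr hc1
  set G : ℝ → ℝ := fun b =>
    (b + 2 * Real.arctan ((c + 1 - s) * Real.sin b /
      (s * (1 + Real.cos b) + (c + 1) * (1 - Real.cos b)))) / s with hG
  have key : ∀ b : ℝ, HasDerivAt G ((c - Real.cos b)⁻¹) b := by
    intro b
    have hcb : 0 < c - Real.cos b := by have := Real.cos_le_one b; linarith
    have hd : 0 < s * (1 + Real.cos b) + (c + 1) * (1 - Real.cos b) := by
      rcases lt_or_eq_of_le (Real.cos_le_one b) with h | h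
      · have h1 : -1 ≤ Real.cos b := Real.neg_one_le_cos b
        nlinarith
      · rw [← h]; nlinarith
    have hu : HasDerivAt (fun b => (c + 1 - s) * Real.sin b) ((c + 1 - s) * Real.cos b) b :=
      (Real.hasDerivAt_sin b).const_mul _
    have hv : HasDerivAt (fun b => s * (1 + Real.cos b) + (c + 1) * (1 - Real.cos b))
        (s * (-Real.sin b) + (c + 1) * (Real.sin b)) b := by
      have h1 : HasDerivAt (fun b => 1 + Real.cos b) (-Real.sin b) b :=
        (Real.hasDerivAt_cos b).const_add 1
      have h2 : HasDerivAt (fun b => 1 - Real.cos b) (Real.sin b) b := by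
        simpa using ((Real.hasDerivAt_cos b).const_sub 1)
      exact (h1.const_mul s).add (h2.const_mul (c + 1))
    have hq := hu.div hv hd.ne'
    have hder := ((hasDerivAt_id b).add
      (((Real.hasDerivAt_arctan _).comp b hq).const_mul 2)).div_const s
    convert hder using 1
    · rfl
    · rfl
    · rfl
    set S := Real.sin b
    set C := Real.cos b
    set u := (c + 1 - s) * S with hu'
    set d := s * (1 + C) + (c + 1) * (1 - C) with hd'
    have hsc : S ^ 2 = 1 - C ^ 2 := Real.sin_sq b
    have hA : (c + 1 - s) * C * d - u * (s * -S + (c + 1) * S)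
        = 2 * (c + 1) * (C - c + s) := by
      rw [hu', hd']
      linear_combination (-(C + 1)) * hs2 + (-(c + 1 - s)^2) * hsc
    have hB : d ^ 2 + u ^ 2 = 4 * (c + 1) * (c - C) := by
      rw [hu', hd']
      linear_combination ((c + 1 - s)^2) * hsc + (2 + 2 * C) * hs2
    have h1 : 1 / (1 + (u / d) ^ 2) *
        (((c + 1 - s) * C * d - u * (s * -S + (c + 1) * S)) / d ^ 2)
        = ((c + 1 - s) * C * d - u * (s * -S + (c + 1) * S)) / (d ^ 2 + u ^ 2) := by
      have hdu : (0:ℝ) < d ^ 2 + u ^ 2 := by positivity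
      field_simp
    rw [show ((fun b => (c + 1 - s) * Real.sin b) / fun b => s * (1 + Real.cos b) + (c + 1) * (1 - Real.cos b)) b = u / d from rfl, h1, hA, hB]
    have hc0 : (c:ℝ) + 1 ≠ 0 := by linarith
    field_simp
    ring
  have hcont : IntervalIntegrable (fun b => (c - Real.cos b)⁻¹) MeasureTheory.volume 0 π := by
    apply Continuous.intervalIntegrable
    exact (continuous_const.sub Real.continuous_cos).inv₀
      (fun x => by have := Real.cos_le_one x; intro h; simp only [Pi.sub_apply] at h; nlinarith [h])
  rw [intervalIntegral.integral_eq_sub_of_hasDerivAt (fun b _ => key b) hcont]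
  simp [hG, Real.sin_pi]

noncomputable def fOut (a : ℝ) : ℝ :=
  -4 * π * Real.sin (a/2) * Real.cos (a/2)^2 / Real.sqrt (2 - Real.cos (a/2)^2)

noncomputable def FOut (a : ℝ) : ℝ :=
  -4 * π * (Real.cos (a/2) * Real.sqrt (2 - Real.cos (a/2)^2))
    + 8 * π * Real.arcsin (Real.cos (a/2) / Real.sqrt 2)

lemma fOut_deriv (a : ℝ) : HasDerivAt FOut (fOut a) a := by
  have hC1 : Real.cos (a/2)^2 ≤ 1 := Real.cos_sq_le_one _
  have hpos : (0:ℝ) < 2 - Real.cos (a/2)^2 := by nlinarith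
  have hsq : Real.sqrt (2 - Real.cos (a/2)^2) * Real.sqrt (2 - Real.cos (a/2)^2)
      = 2 - Real.cos (a/2)^2 := Real.mul_self_sqrt hpos.le
  have hsqpos : 0 < Real.sqrt (2 - Real.cos (a/2)^2) := Real.sqrt_pos.mpr hpos
  have hv : HasDerivAt (fun a : ℝ => Real.cos (a/2)) (-Real.sin (a/2) * (1/2)) a := by
    have := (Real.hasDerivAt_cos (a/2)).comp a ((hasDerivAt_id a).div_const 2)
    simpa [Function.comp_def] using this
  have hv2 : HasDerivAt (fun a : ℝ => 2 - Real.cos (a/2)^2)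
      (-(2 * Real.cos (a/2) ^ 1 * (-Real.sin (a/2) * (1/2)))) a := (hv.pow 2).const_sub 2
  have hsqrt := (Real.hasDerivAt_sqrt hpos.ne').comp a hv2
  have harc_in : HasDerivAt (fun a : ℝ => Real.cos (a/2) / Real.sqrt 2)
      ((-Real.sin (a/2) * (1/2)) / Real.sqrt 2) a := hv.div_const _
  have h2lt : |Real.cos (a/2) / Real.sqrt 2| < 1 := by
    rw [abs_div, abs_of_pos (by positivity : (0:ℝ) < Real.sqrt 2), div_lt_one (by positivity)]
    have h1 : |Real.cos (a/2)| ≤ 1 := Real.abs_cos_le_one _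
    have h2 : (1:ℝ) < Real.sqrt 2 := by
      have : (1:ℝ) = Real.sqrt 1 := (Real.sqrt_one).symm
      rw [this]; exact Real.sqrt_lt_sqrt (by norm_num) (by norm_num)
    linarith
  have hne1 : Real.cos (a/2) / Real.sqrt 2 ≠ 1 := by
    intro h; rw [h] at h2lt; simp at h2lt
  have hne1' : Real.cos (a/2) / Real.sqrt 2 ≠ -1 := by
    intro h; rw [h] at h2lt; simp at h2lt
  have harc := (Real.hasDerivAt_arcsin hne1' hne1).comp a harc_in
  have hF := ((hv.mul hsqrt).const_mul (-4 * π)).add (harc.const_mul (8 * π))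
  convert hF using 1
  · rfl
  · rfl
  · rfl
  have hs2 : Real.sqrt 2 * Real.sqrt 2 = 2 := Real.mul_self_sqrt (by norm_num)
  have hs2pos : (0:ℝ) < Real.sqrt 2 := by positivity
  have harg : Real.sqrt (1 - (Real.cos (a/2) / Real.sqrt 2)^2)
      = Real.sqrt (2 - Real.cos (a/2)^2) / Real.sqrt 2 := by
    rw [show 1 - (Real.cos (a/2) / Real.sqrt 2)^2 = (2 - Real.cos (a/2)^2) / 2 by
      rw [div_pow]; rw [show (Real.sqrt 2)^2 = 2 by rw [sq]; exact hs2]; ring]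
    rw [Real.sqrt_div hpos.le]
  simp only [Function.comp, fOut, harg]
  set Sh := Real.sin (a/2) with hSh
  set Ch := Real.cos (a/2) with hCh
  set R := Real.sqrt (2 - Ch^2) with hR
  set r2 := Real.sqrt 2 with hr2
  rw [one_div_div]
  field_simp
  linear_combination (-4*Sh) * hsq

lemma outerInt : (∫ a in (0:ℝ)..π, fOut a) = 4 * π - 2 * π ^ 2 := by
  have hcont : Continuous fOut := by
    apply Continuous.div
    · continuity
    · continuity
    · intro x
      have h1 : Real.cos (x/2)^2 ≤ 1 := Real.cos_sq_le_one _
      have : (0:ℝ) < 2 - Real.cos (x/2)^2 := by nlinarith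
      positivity
  rw [intervalIntegral.integral_eq_sub_of_hasDerivAt (fun a _ => fOut_deriv a)
    (hcont.intervalIntegrable _ _)]
  have h1 : Real.arcsin ((Real.sqrt 2)⁻¹) = π / 4 := by
    rw [show (Real.sqrt 2)⁻¹ = Real.sqrt 2 / 2 by
      rw [inv_eq_iff_eq_inv, inv_div, eq_div_iff (by positivity)]
      linear_combination Real.mul_self_sqrt (by norm_num : (0:ℝ) ≤ 2)]
    rw [← Real.sin_pi_div_four, Real.arcsin_sin (by linarith [Real.pi_pos]) (by linarith [Real.pi_pos])]
  norm_num [FOut, Real.cos_pi_div_two, h1]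
  ring


lemma glue (a : ℝ) (ha : a ∈ Set.uIcc (0:ℝ) π) :
    (∫ b in (0:ℝ)..π, (Real.cos (2*a) - 1)/(2 - Real.cos a - Real.cos b)) = fOut a := by
  rw [Set.uIcc_of_le Real.pi_pos.le] at ha
  rcases eq_or_lt_of_le ha.1 with h0 | h0
  · rw [← h0]
    norm_num [fOut]
  · set S := Real.sin (a/2) with hSdef
    set C := Real.cos (a/2) with hCdef
    have hS : 0 < S := Real.sin_pos_of_pos_of_lt_pi (by linarith)
      (by nlinarith [Real.pi_pos, ha.2])
    have hpyth : S^2 + C^2 = 1 := Real.sin_sq_add_cos_sq _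
    have hcosa : Real.cos a = 1 - 2*S^2 := by
      have h := Real.cos_sq (a/2)
      rw [show 2*(a/2) = a by ring, ← hCdef] at h
      linarith [hpyth]
    have hcos2a : Real.cos (2*a) = 2 * (Real.cos a)^2 - 1 := Real.cos_two_mul a
    set c := 2 - Real.cos a with hcdef
    have hc : 1 < c := by rw [hcdef, hcosa]; nlinarith
    have hstep : (∫ b in (0:ℝ)..π, (Real.cos (2*a) - 1)/(c - Real.cos b))
        = (Real.cos (2*a) - 1) * ∫ b in (0:ℝ)..π, (c - Real.cos b)⁻¹ := by
      simp only [div_eq_mul_inv]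
      rw [intervalIntegral.integral_const_mul]
    rw [hstep, innerInt c hc]
    have hC2 : (0:ℝ) < 2 - C^2 := by nlinarith
    have hsqC : Real.sqrt (2 - C^2) * Real.sqrt (2 - C^2) = 2 - C^2 :=
      Real.mul_self_sqrt hC2.le
    have hsqCpos : 0 < Real.sqrt (2 - C^2) := Real.sqrt_pos.mpr hC2
    have hsqrt_eq : Real.sqrt (c^2 - 1) = 2 * S * Real.sqrt (2 - C^2) := by
      rw [show c^2 - 1 = (2 * S * Real.sqrt (2 - C^2))^2 by
        rw [mul_pow, sq (Real.sqrt _), hsqC, hcdef, hcosa]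
        linear_combination (4*S^2) * hpyth]
      exact Real.sqrt_sq (by positivity)
    have hnum : Real.cos (2*a) - 1 = -8 * S^2 * C^2 := by
      rw [hcos2a, hcosa]
      linear_combination (8*S^2) * hpyth
    rw [hsqrt_eq, hnum, fOut]
    rw [← hSdef, ← hCdef]
    field_simp
    ring


theorem stmt_9 :
    (∫ a in (0:ℝ)..Real.pi, ∫ b in (0:ℝ)..Real.pi,
        (Real.cos (2 * a) - 1) / (2 - Real.cos a - Real.cos b)) =
    4 * Real.pi - 2 * Real.pi ^ 2 := by
  rw [intervalIntegral.integral_congr (g := fOut) (fun a ha => glue a ha)]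
  exact outerInt
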